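/- Let ρ be a density operator on H_A ⊗ H_B with dim H_A = d, and let 𝒦 be a family of PVMs on H_A such that ρ is a ZUS for each PVM in 𝒦 and the *-algebra generated by all projections in 𝒦 is all of B(H_A). Then ρ_A = Tr_B ρ = (1/d) I_A. -/

import Mathlib

open Matrix Kronecker Finset ComplexOrder

noncomputable section

/-- Partial trace over the first tensor factor. -/
def ptraceA {α β : Type*} [Fintype α] (ρ : Matrix (α × β) (α × β) ℂ) : Matrix β β ℂ :=
  Matrix.of fun j j' => ∑ i, ρ (i, j) (i, j')

/-- Partial trace over the second tensor factor. -/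
def ptraceB {α β : Type*} [Fintype β] (ρ : Matrix (α × β) (α × β) ℂ) : Matrix α α ℂ :=
  Matrix.of fun i i' => ∑ j, ρ (i, j) (i', j)

/-! Write `ρ = Bᴴ B` and `Q = P ⊗ 1` for a projection `P` on `H_A`. Since `Q` is idempotent and the
partial trace over `A` is cyclic in operators on `A`, `Tr_A (Q ρ) = Tr_A ((B Q)ᴴ (B Q))` is a Gram
matrix. A product of two Gram matrices `Xᴴ X Yᴴ Y` vanishes only if `X Yᴴ = 0`, and for
`X = B (P_α ⊗ 1)`, `Y = B (P_β ⊗ 1)` this cross term traces down to `P_α ρ_A P_β = 0`. Hence `ρ_A`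
commutes with every projection of every PVM, so with the *-algebra they generate, which is all of
`B(H_A)`; thus `ρ_A` is scalar, and `Tr ρ_A = 1` fixes the scalar to `1/d`. -/

section PartialTrace

variable {α β : Type*} [Fintype β]

theorem Matrix.IsHermitian.ptraceB {ρ : Matrix (α × β) (α × β) ℂ} (hρ : ρ.IsHermitian) :
    (ptraceB ρ).IsHermitian := by
  ext i i'
  simp only [_root_.ptraceB, conjTranspose_apply, of_apply, star_sum]
  exact Finset.sum_congr rfl fun j _ => by rw [← conjTranspose_apply, hρ.eq]

variable [Fintype α]

theorem trace_ptraceB (ρ : Matrix (α × β) (α × β) ℂ) : (ptraceB ρ).trace = ρ.trace := by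
  simp [ptraceB, Matrix.trace, Fintype.sum_prod_type]

variable [DecidableEq β]

theorem kronecker_one_mul_apply (X : Matrix α α ℂ) (Y : Matrix (α × β) (α × β) ℂ)
    (p q : α × β) : ((X ⊗ₖ (1 : Matrix β β ℂ)) * Y) p q = ∑ k, X p.1 k * Y (k, p.2) q := by
  simp [mul_apply, Fintype.sum_prod_type, one_apply, mul_ite]

theorem mul_kronecker_one_apply (X : Matrix α α ℂ) (Y : Matrix (α × β) (α × β) ℂ)
    (p q : α × β) : (Y * (X ⊗ₖ (1 : Matrix β β ℂ))) p q = ∑ k, Y p (k, q.2) * X k q.1 := by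
  simp [mul_apply, Fintype.sum_prod_type, one_apply]

theorem ptraceA_kronecker_one_mul_comm (X : Matrix α α ℂ) (Y : Matrix (α × β) (α × β) ℂ) :
    ptraceA ((X ⊗ₖ (1 : Matrix β β ℂ)) * Y) = ptraceA (Y * (X ⊗ₖ 1)) := by
  ext j j'
  simp only [ptraceA, of_apply, kronecker_one_mul_apply, mul_kronecker_one_apply]
  rw [Finset.sum_comm]
  simp [mul_comm]

theorem ptraceB_kronecker_one_mul (X : Matrix α α ℂ) (Y : Matrix (α × β) (α × β) ℂ) :
    ptraceB ((X ⊗ₖ (1 : Matrix β β ℂ)) * Y) = X * ptraceB Y := by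
  ext i i'
  simp only [ptraceB, of_apply, kronecker_one_mul_apply]
  simp only [mul_apply, of_apply, Finset.mul_sum]
  exact Finset.sum_comm

theorem ptraceB_mul_kronecker_one (X : Matrix α α ℂ) (Y : Matrix (α × β) (α × β) ℂ) :
    ptraceB (Y * (X ⊗ₖ (1 : Matrix β β ℂ))) = ptraceB Y * X := by
  ext i i'
  simp only [ptraceB, of_apply, mul_kronecker_one_apply]
  simp only [mul_apply, of_apply, Finset.sum_mul]
  exact Finset.sum_comm

end PartialTrace

section Reshape

variable {α β γ : Type*} [Fintype γ]

def reshapeA (M : Matrix γ (α × β) ℂ) : Matrix (α × γ) β ℂ :=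
  of fun p j => M p.2 (p.1, j)

theorem ptraceA_conjTranspose_mul [Fintype α] (M N : Matrix γ (α × β) ℂ) :
    ptraceA (Mᴴ * N) = (reshapeA M)ᴴ * reshapeA N := by
  ext j j'
  simp [ptraceA, reshapeA, mul_apply, Fintype.sum_prod_type]

theorem ptraceB_conjTranspose_mul [Fintype β] (M N : Matrix γ (α × β) ℂ) :
    ptraceB (Mᴴ * N) = (ptraceB (reshapeA N * (reshapeA M)ᴴ))ᵀ := by
  ext i i'
  simp only [ptraceB, reshapeA, mul_apply, conjTranspose_apply, of_apply, transpose_apply,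
    mul_comm]
  exact Finset.sum_comm

theorem ptraceB_conjTranspose_mul_eq_zero [Fintype α] [Fintype β] {M N : Matrix γ (α × β) ℂ}
    (h : ptraceA (Mᴴ * M) * ptraceA (Nᴴ * N) = 0) : ptraceB (Mᴴ * N) = 0 := by
  rw [ptraceA_conjTranspose_mul, ptraceA_conjTranspose_mul, conjTranspose_mul_self_mul_eq_zero,
    mul_conjTranspose_mul_self_eq_zero] at h
  have h' : reshapeA N * (reshapeA M)ᴴ = 0 := by
    simpa using congrArg conjTranspose h
  rw [ptraceB_conjTranspose_mul, h']
  ext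
  simp [ptraceB]

end Reshape

theorem Matrix.PosSemidef.exists_eq_conjTranspose_mul_self {n : Type*} [Fintype n]
    {ρ : Matrix n n ℂ} (hρ : ρ.PosSemidef) : ∃ B : Matrix n n ℂ, ρ = Bᴴ * B := by
  classical
  open scoped MatrixOrder Matrix.Norms.L2Operator in
  exact CStarAlgebra.nonneg_iff_eq_star_mul_self.mp hρ.nonneg

section Projection

variable {α β : Type*} [Fintype α] [Fintype β] [DecidableEq β]

theorem IsStarProjection.kronecker_one {P : Matrix α α ℂ} (hP : IsStarProjection P) :
    IsStarProjection (P ⊗ₖ (1 : Matrix β β ℂ)) where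
  isIdempotentElem := by
    rw [IsIdempotentElem, ← mul_kronecker_mul, hP.isIdempotentElem.eq, Matrix.one_mul]
  isSelfAdjoint := by
    rw [IsSelfAdjoint, star_eq_conjTranspose, conjTranspose_kronecker, conjTranspose_one,
      ← star_eq_conjTranspose, hP.isSelfAdjoint.star_eq]

theorem ptraceA_kronecker_one_mul_eq_conjTranspose_mul {P : Matrix α α ℂ}
    (hP : IsStarProjection P) (B : Matrix (α × β) (α × β) ℂ) :
    ptraceA ((P ⊗ₖ (1 : Matrix β β ℂ)) * (Bᴴ * B)) =
      ptraceA ((B * (P ⊗ₖ 1))ᴴ * (B * (P ⊗ₖ 1))) := by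
  have hQ := hP.kronecker_one (β := β)
  calc ptraceA ((P ⊗ₖ 1) * (Bᴴ * B)) = ptraceA (Bᴴ * B * ((P ⊗ₖ 1) * (P ⊗ₖ 1))) := by
        rw [ptraceA_kronecker_one_mul_comm, hQ.isIdempotentElem.eq]
    _ = ptraceA ((P ⊗ₖ 1) * (Bᴴ * B * (P ⊗ₖ 1))) := by
        rw [ptraceA_kronecker_one_mul_comm, Matrix.mul_assoc (Bᴴ * B)]
    _ = ptraceA ((B * (P ⊗ₖ 1))ᴴ * (B * (P ⊗ₖ 1))) := by
        rw [conjTranspose_mul, ← star_eq_conjTranspose (P ⊗ₖ 1), hQ.isSelfAdjoint.star_eq]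
        simp only [Matrix.mul_assoc]

theorem mul_ptraceB_mul_eq_zero {ρ : Matrix (α × β) (α × β) ℂ} (hρ : ρ.PosSemidef)
    {P Q : Matrix α α ℂ} (hP : IsStarProjection P) (hQ : IsStarProjection Q)
    (h : ptraceA ((P ⊗ₖ (1 : Matrix β β ℂ)) * ρ) * ptraceA ((Q ⊗ₖ (1 : Matrix β β ℂ)) * ρ) = 0) :
    P * ptraceB ρ * Q = 0 := by
  obtain ⟨B, rfl⟩ := hρ.exists_eq_conjTranspose_mul_self
  rw [ptraceA_kronecker_one_mul_eq_conjTranspose_mul hP,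
    ptraceA_kronecker_one_mul_eq_conjTranspose_mul hQ] at h
  have hcross := ptraceB_conjTranspose_mul_eq_zero h
  rwa [conjTranspose_mul, ← star_eq_conjTranspose (P ⊗ₖ 1),
    hP.kronecker_one.isSelfAdjoint.star_eq, Matrix.mul_assoc, ← Matrix.mul_assoc _ B,
    ptraceB_kronecker_one_mul, ptraceB_mul_kronecker_one, ← Matrix.mul_assoc] at hcross

end Projection

theorem commute_of_mul_mul_eq_zero {R ι : Type*} [Semiring R] [Fintype ι] {P : ι → R}
    (hsum : ∑ a, P a = 1) {X : R} (h : ∀ a b, a ≠ b → P a * X * P b = 0) (c : ι) :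
    Commute (P c) X := by
  have hl : P c * X = P c * X * P c :=
    calc P c * X = ∑ b, P c * X * P b := by rw [← Finset.mul_sum, hsum, mul_one]
      _ = P c * X * P c :=
        Finset.sum_eq_single c (fun b _ hb => h c b (Ne.symm hb)) (by simp)
  have hr : X * P c = P c * X * P c :=
    calc X * P c = ∑ a, P a * X * P c := by rw [← Finset.sum_mul, ← Finset.sum_mul, hsum, one_mul]
      _ = P c * X * P c :=
        Finset.sum_eq_single c (fun a _ ha => h a c ha) (by simp)
  exact hl.trans hr.symm

theorem mem_center_of_commute_of_adjoin_eq_top {R A : Type*} [CommSemiring R] [StarRing R]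
    [Semiring A] [StarRing A] [Algebra R A] [StarModule R A] {S : Set A}
    (hS : StarAlgebra.adjoin R S = ⊤) {x : A} (hx : IsSelfAdjoint x)
    (h : ∀ s ∈ S, Commute s x) : x ∈ Set.center A := by
  have hle : StarAlgebra.adjoin R S ≤ StarSubalgebra.centralizer R {x} :=
    StarAlgebra.adjoin_le fun s hs => (StarSubalgebra.mem_centralizer_iff R).2 <| by
      rintro _ rfl
      rw [hx.star_eq]
      exact ⟨(h s hs).eq.symm, (h s hs).eq.symm⟩
  rw [hS] at hle
  exact Semigroup.mem_center_iff.2 fun y =>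
    ((StarSubalgebra.mem_centralizer_iff R).1 (hle (StarSubalgebra.mem_top (x := y))) x rfl).1.symm

theorem Matrix.eq_inv_card_smul_one_of_mem_center {n 𝕜 : Type*} [Fintype n] [DecidableEq n]
    [Field 𝕜] {X : Matrix n n 𝕜} (hX : X ∈ Set.center (Matrix n n 𝕜)) (htr : X.trace = 1) :
    X = (Fintype.card n : 𝕜)⁻¹ • 1 := by
  obtain ⟨c, rfl⟩ := (center_eq_range (n := n) (R := 𝕜)) ▸ hX
  rw [scalar_apply, trace_diagonal, Finset.sum_const, Finset.card_univ, nsmul_eq_mul] at htr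
  rw [scalar_apply, ← smul_one_eq_diagonal, eq_inv_of_mul_eq_one_right htr]

theorem stmt11_general {d dB : ℕ} {ι : Type} {κ : ι → Type}
    [∀ i, Fintype (κ i)]
    (ρ : Matrix (Fin d × Fin dB) (Fin d × Fin dB) ℂ)
    (hρ : ρ.PosSemidef) (htr : ρ.trace = 1)
    (P : (i : ι) → κ i → Matrix (Fin d) (Fin d) ℂ)
    (hPherm : ∀ i α, (P i α).IsHermitian) (hPidem : ∀ i α, P i α * P i α = P i α)
    (hPsum : ∀ i, ∑ α, P i α = 1)
    (hZUS : ∀ i α β, α ≠ β →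
      ptraceA ((P i α ⊗ₖ (1 : Matrix (Fin dB) (Fin dB) ℂ)) * ρ) *
        ptraceA ((P i β ⊗ₖ (1 : Matrix (Fin dB) (Fin dB) ℂ)) * ρ) = 0)
    (hgen : StarAlgebra.adjoin ℂ {X | ∃ i α, X = P i α} = ⊤) :
    ptraceB ρ = ((d : ℂ))⁻¹ • 1 := by
  have hproj i α : IsStarProjection (P i α) := ⟨hPidem i α, (hPherm i α).isSelfAdjoint⟩
  have hcomm i : ∀ α, Commute (P i α) (ptraceB ρ) :=
    commute_of_mul_mul_eq_zero (hPsum i) fun α β hαβ =>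
      mul_ptraceB_mul_eq_zero hρ (hproj i α) (hproj i β) (hZUS i α β hαβ)
  have hcenter : ptraceB ρ ∈ Set.center _ :=
    mem_center_of_commute_of_adjoin_eq_top hgen hρ.1.ptraceB.isSelfAdjoint <| by
      rintro _ ⟨i, α, rfl⟩
      exact hcomm i α
  simpa using eq_inv_card_smul_one_of_mem_center hcenter (by rw [trace_ptraceB, htr])

/-- If `ρ` is a common ZUS for a family of PVMs whose projections generate
`B(H_A)` as a *-algebra, then `ρ_A = (1/d) I`. -/
theorem stmt11 {d dB : ℕ} {ι : Type} [Fintype ι] {κ : ι → Type}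
    [∀ i, Fintype (κ i)] [∀ i, DecidableEq (κ i)]
    (ρ : Matrix (Fin d × Fin dB) (Fin d × Fin dB) ℂ)
    (hρ : ρ.PosSemidef) (htr : ρ.trace = 1)
    (P : (i : ι) → κ i → Matrix (Fin d) (Fin d) ℂ)
    (hPherm : ∀ i α, (P i α).IsHermitian) (hPidem : ∀ i α, P i α * P i α = P i α)
    (hPorth : ∀ i α β, α ≠ β → P i α * P i β = 0) (hPsum : ∀ i, ∑ α, P i α = 1)
    (hZUS : ∀ i α β, α ≠ β →
      ptraceA ((P i α ⊗ₖ (1 : Matrix (Fin dB) (Fin dB) ℂ)) * ρ) *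
        ptraceA ((P i β ⊗ₖ (1 : Matrix (Fin dB) (Fin dB) ℂ)) * ρ) = 0)
    (hgen : StarAlgebra.adjoin ℂ {X | ∃ i α, X = P i α} = ⊤) :
    ptraceB ρ = ((d : ℂ))⁻¹ • 1 :=
  stmt11_general ρ hρ htr P hPherm hPidem hPsum hZUS hgen
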